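/- arXiv:2410.04530 — 2 statements merged into one kernel-verified Lean document; each statement's English description precedes it below -/
import Mathlib

section
/- Let N ≥ 5 and -2 < γ < 0. The function U(x) = C_{N,γ} (1 + |x|^{2+γ})^{-(N-4-γ)/(2+γ)}, with C_{N,γ} = [(N-4-γ)(N-2)(N+γ)(N+2+2γ)]^{(N-4-γ)/(4(2+γ))}, is a positive radial solution of the weighted fourth-order equation Δ(|x|^{-γ} Δ u) = |x|^γ u^{(N+4+3γ)/(N-4-γ)} on ℝ^N \ {0}. -/
/-!
For a radial function `u(x) = G(|x|^p)` one has `Δu(x) = |x|^(p-2) (L G)(|x|^p)` with the ordinary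
differential operator `L G = p² t G'' + p (p + N - 2) G'`. For `p = 2 + γ` the factor `|x|^(p-2)`
is `|x|^γ`, which the weight `|x|^(-γ)` cancels, so `Δ(|x|^(-γ) Δ U) = |x|^γ (L L G)(|x|^p)` for the
profile `G(t) = C (1 + t)^m`, `m = -(N-4-γ)/(2+γ)`. The operator `L` sends `(1 + t)^k` to a
combination of `(1 + t)^(k-1)` and `(1 + t)^(k-2)`, and the choice of `m` kills all but the last
term of `L L G`, which is `C p⁴ m(m-1)(m-2)(m-3) (1 + t)^(m-4) = C^q (1 + t)^(m q)`.
-/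

open MeasureTheory Real
open scoped RealInnerProductSpace

noncomputable def lap {N : ℕ} (u : EuclideanSpace ℝ (Fin N) → ℝ)
    (x : EuclideanSpace ℝ (Fin N)) : ℝ :=
  ∑ i : Fin N, fderiv ℝ (fun y => fderiv ℝ u y (EuclideanSpace.single i 1)) x
      (EuclideanSpace.single i 1)

open Filter Topology

theorem sq_rpow_div_two {r : ℝ} (hr : 0 ≤ r) (a : ℝ) : (r ^ 2) ^ (a / 2) = r ^ a := by
  rw [Real.rpow_div_two_eq_sqrt a (sq_nonneg r), Real.sqrt_sq hr]

theorem hasDerivAt_linear_combination_one_add_rpow (c₁ c₂ m : ℝ) {t : ℝ} (ht : -1 < t) :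
    HasDerivAt (fun t => c₁ * (1 + t) ^ m + c₂ * (1 + t) ^ (m - 1))
      (c₁ * m * (1 + t) ^ (m - 1) + c₂ * (m - 1) * (1 + t) ^ (m - 1 - 1)) t := by
  have hpow : ∀ k : ℝ, HasDerivAt (fun t => (1 + t) ^ k) (k * (1 + t) ^ (k - 1)) t := fun k => by
    simpa using ((hasDerivAt_id' t).const_add 1).rpow_const (p := k) (Or.inl (by linarith))
  exact (((hpow m).const_mul c₁).add ((hpow (m - 1)).const_mul c₂)).congr_deriv (by ring)

section

variable {N : ℕ} {u : EuclideanSpace ℝ (Fin N) → ℝ} {x : EuclideanSpace ℝ (Fin N)}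

theorem lap_comp_norm_sq {f f' f'' : ℝ → ℝ} (hu : ∀ᶠ y in 𝓝 x, u y = f (‖y‖ ^ 2))
    (hf : ∀ᶠ s in 𝓝 (‖x‖ ^ 2), HasDerivAt f (f' s) s)
    (hf' : HasDerivAt f' (f'' (‖x‖ ^ 2)) (‖x‖ ^ 2)) :
    lap u x = 4 * ‖x‖ ^ 2 * f'' (‖x‖ ^ 2) + 2 * N * f' (‖x‖ ^ 2) := by
  have hgrad : ∀ᶠ y in 𝓝 x, fderiv ℝ u y = f' (‖y‖ ^ 2) • (2 • innerSL ℝ y) := by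
    have hnorm_sq : Tendsto (fun y : EuclideanSpace ℝ (Fin N) => ‖y‖ ^ 2) (𝓝 x) (𝓝 (‖x‖ ^ 2)) :=
      (continuous_norm.pow 2).continuousAt
    filter_upwards [hu.eventually_nhds, hnorm_sq.eventually hf] with y hy hfy
    exact ((hfy.comp_hasFDerivAt y (hasFDerivAt_id y).norm_sq).congr_of_eventuallyEq hy).fderiv
  have hpartial : ∀ i : Fin N,
      fderiv ℝ (fun y => fderiv ℝ u y (EuclideanSpace.single i 1)) x (EuclideanSpace.single i 1)
        = 4 * f'' (‖x‖ ^ 2) * x i ^ 2 + 2 * f' (‖x‖ ^ 2) := by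
    intro i
    have hdir : (fun y => fderiv ℝ u y (EuclideanSpace.single i 1)) =ᶠ[𝓝 x]
        fun y => f' (‖y‖ ^ 2) * (2 * y i) := by
      filter_upwards [hgrad] with y hy
      simp [hy, EuclideanSpace.inner_single_right]
    have hderiv := (hf'.comp_hasFDerivAt x (hasFDerivAt_id x).norm_sq).mul'
      ((EuclideanSpace.proj (𝕜 := ℝ) i).hasFDerivAt.const_smul (2 : ℝ))
    rw [(hderiv.congr_of_eventuallyEq hdir).fderiv]
    simp [EuclideanSpace.inner_single_right]
    ring
  simp only [lap, hpartial, Finset.sum_add_distrib, ← Finset.mul_sum,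
    ← EuclideanSpace.real_norm_sq_eq, Finset.sum_const,
    Finset.card_univ, Fintype.card_fin, nsmul_eq_mul]
  ring

theorem lap_comp_rpow_norm {G G' G'' : ℝ → ℝ} {p : ℝ} (hx : x ≠ 0)
    (hu : ∀ᶠ y in 𝓝 x, u y = G (‖y‖ ^ p))
    (hG : ∀ᶠ t in 𝓝 (‖x‖ ^ p), HasDerivAt G (G' t) t)
    (hG' : HasDerivAt G' (G'' (‖x‖ ^ p)) (‖x‖ ^ p)) :
    lap u x = ‖x‖ ^ (p - 2) *
      (p ^ 2 * ‖x‖ ^ p * G'' (‖x‖ ^ p) + p * (p + N - 2) * G' (‖x‖ ^ p)) := by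
  have hr : 0 < ‖x‖ := norm_pos_iff.mpr hx
  have hs : 0 < ‖x‖ ^ 2 := by positivity
  have hpow : HasDerivAt (fun s : ℝ => s ^ (p / 2)) (p / 2 * (‖x‖ ^ 2) ^ (p / 2 - 1)) (‖x‖ ^ 2) :=
    Real.hasDerivAt_rpow_const (Or.inl hs.ne')
  have hG_near : ∀ᶠ s in 𝓝 (‖x‖ ^ 2), HasDerivAt G (G' (s ^ (p / 2))) (s ^ (p / 2)) :=
    (Real.continuousAt_rpow_const _ (p / 2) (Or.inl hs.ne')).eventually
      (sq_rpow_div_two (norm_nonneg x) p ▸ hG)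
  rw [lap_comp_norm_sq (f := fun s => G (s ^ (p / 2)))
    (f' := fun s => G' (s ^ (p / 2)) * (p / 2 * s ^ (p / 2 - 1)))
    (f'' := fun s => G'' (s ^ (p / 2)) * (p / 2 * s ^ (p / 2 - 1)) * (p / 2 * s ^ (p / 2 - 1))
      + G' (s ^ (p / 2)) * (p / 2 * ((p / 2 - 1) * s ^ (p / 2 - 1 - 1))))]
  · rw [show p / 2 - 1 - 1 = (p - 4) / 2 by ring, show p / 2 - 1 = (p - 2) / 2 by ring]
    simp only [sq_rpow_div_two (norm_nonneg x), Real.rpow_sub hr]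
    norm_num
    field_simp
    ring
  · filter_upwards [hu] with y hy
    rw [hy, sq_rpow_div_two (norm_nonneg _)]
  · filter_upwards [hG_near, Ioi_mem_nhds hs] with s hGs hs0
    exact hGs.comp s (Real.hasDerivAt_rpow_const (Or.inl hs0.ne'))
  · rw [← sq_rpow_div_two (norm_nonneg x) p] at hG'
    exact (hG'.comp (‖x‖ ^ 2) hpow).mul
      ((Real.hasDerivAt_rpow_const (Or.inl hs.ne')).const_mul (p / 2))

theorem lap_linear_combination_one_add_rpow_norm {p m c₁ c₂ : ℝ} (hx : x ≠ 0)
    (hu : ∀ᶠ y in 𝓝 x, u y = c₁ * (1 + ‖y‖ ^ p) ^ m + c₂ * (1 + ‖y‖ ^ p) ^ (m - 1)) :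
    lap u x = ‖x‖ ^ (p - 2) *
      (c₁ * (p * m * (p * m + N - 2)) * (1 + ‖x‖ ^ p) ^ (m - 1)
        + (c₂ * (p * (m - 1) * (p * (m - 1) + N - 2)) - c₁ * p ^ 2 * m * (m - 1))
          * (1 + ‖x‖ ^ p) ^ (m - 2)
        - c₂ * p ^ 2 * (m - 1) * (m - 2) * (1 + ‖x‖ ^ p) ^ (m - 3)) := by
  have ht : -1 < ‖x‖ ^ p := by linarith [Real.rpow_nonneg (norm_nonneg x) p]
  rw [lap_comp_rpow_norm (G'' := fun t => c₁ * m * (m - 1) * (1 + t) ^ (m - 1 - 1)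
      + c₂ * (m - 1) * (m - 1 - 1) * (1 + t) ^ (m - 1 - 1 - 1)) hx hu
    ((eventually_gt_nhds ht).mono fun t ht => hasDerivAt_linear_combination_one_add_rpow c₁ c₂ m ht)
    (hasDerivAt_linear_combination_one_add_rpow (c₁ * m) (c₂ * (m - 1)) (m - 1) ht)]
  have hs : 1 + ‖x‖ ^ p ≠ 0 := by linarith
  rw [show m - 1 - 1 - 1 = m - 3 by ring, show m - 1 - 1 = m - 3 + 1 by ring,
    show m - 1 = m - 3 + 1 + 1 by ring, show m - 2 = m - 3 + 1 by ring]
  simp only [Real.rpow_add_one hs]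
  ring

variable {p m : ℝ}

/- The condition `p (m - 1) = 2 - N` says that `‖x‖ ^ (p (m - 1))` is the fundamental solution
`‖x‖ ^ (2 - N)`; it makes the leading coefficient vanish in both lemmas below. -/

theorem lap_one_add_rpow_norm (hm : p * (m - 1) + N - 2 = 0) (hx : x ≠ 0) (c : ℝ) :
    lap (fun y => c * (1 + ‖y‖ ^ p) ^ m) x = ‖x‖ ^ (p - 2) *
      (c * p ^ 2 * m * ((1 + ‖x‖ ^ p) ^ (m - 1) - (m - 1) * (1 + ‖x‖ ^ p) ^ (m - 2))) := by
  rw [lap_linear_combination_one_add_rpow_norm (p := p) (m := m) (c₁ := c) (c₂ := 0) hx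
    (.of_forall fun y => by simp)]
  linear_combination ‖x‖ ^ (p - 2) * c * p * m * (1 + ‖x‖ ^ p) ^ (m - 1) * hm

theorem lap_one_add_rpow_norm_sub {c : ℝ}
    (hm : p * (m - 1) + N - 2 = 0) (hx : x ≠ 0)
    (hu : ∀ᶠ y in 𝓝 x, u y = c * ((1 + ‖y‖ ^ p) ^ (m - 1) - (m - 1) * (1 + ‖y‖ ^ p) ^ (m - 2))) :
    lap u x = ‖x‖ ^ (p - 2) *
      (c * p ^ 2 * (m - 1) * (m - 2) * (m - 3) * (1 + ‖x‖ ^ p) ^ (m - 4)) := by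
  have hu' : ∀ᶠ y in 𝓝 x,
      u y = c * (1 + ‖y‖ ^ p) ^ (m - 1) + -(c * (m - 1)) * (1 + ‖y‖ ^ p) ^ (m - 1 - 1) := by
    filter_upwards [hu] with y hy
    rw [hy, show m - 1 - 1 = m - 2 by ring]
    ring
  rw [lap_linear_combination_one_add_rpow_norm hx hu', show m - 1 - 1 = m - 2 by ring,
    show m - 1 - 2 = m - 3 by ring, show m - 1 - 3 = m - 4 by ring]
  linear_combination ‖x‖ ^ (p - 2) * c * p * (m - 1) *
    ((1 + ‖x‖ ^ p) ^ (m - 2) - (m - 2) * (1 + ‖x‖ ^ p) ^ (m - 3)) * hm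

theorem lap_rpow_norm_mul_lap_one_add_rpow_norm {γ : ℝ} (hm : (2 + γ) * (m - 1) + N - 2 = 0)
    (hx : x ≠ 0) (c : ℝ) :
    lap (fun y => ‖y‖ ^ (-γ) * lap (fun z => c * (1 + ‖z‖ ^ (2 + γ)) ^ m) y) x =
      ‖x‖ ^ γ * (c * (2 + γ) ^ 4 * m * (m - 1) * (m - 2) * (m - 3) *
        (1 + ‖x‖ ^ (2 + γ)) ^ (m - 4)) := by
  have hV : ∀ᶠ y in 𝓝 x, ‖y‖ ^ (-γ) * lap (fun z => c * (1 + ‖z‖ ^ (2 + γ)) ^ m) y =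
      c * (2 + γ) ^ 2 * m * ((1 + ‖y‖ ^ (2 + γ)) ^ (m - 1)
        - (m - 1) * (1 + ‖y‖ ^ (2 + γ)) ^ (m - 2)) := by
    filter_upwards [eventually_ne_nhds hx] with y hy
    rw [lap_one_add_rpow_norm hm hy, ← mul_assoc, ← Real.rpow_add (norm_pos_iff.mpr hy)]
    simp
  rw [lap_one_add_rpow_norm_sub hm hx hV, add_sub_cancel_left]
  ring

end

/-- the explicit radial function `U` is a positive radial solution of the
weighted fourth-order equation `Δ(|x|^{-γ} Δ u) = |x|^γ u^{(N+4+3γ)/(N-4-γ)}` on `ℝ^N \ {0}`. -/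
theorem stmt0 (N : ℕ) (hN : 5 ≤ N) (γ : ℝ) (hγ1 : -2 < γ) (hγ2 : γ < 0)
    (q C : ℝ)
    (hq : q = ((N : ℝ) + 4 + 3 * γ) / ((N : ℝ) - 4 - γ))
    (hC : C = (((N : ℝ) - 4 - γ) * ((N : ℝ) - 2) * ((N : ℝ) + γ) * ((N : ℝ) + 2 + 2 * γ)) ^
        (((N : ℝ) - 4 - γ) / (4 * (2 + γ))))
    (U : EuclideanSpace ℝ (Fin N) → ℝ)
    (hU : ∀ x, U x = C * (1 + ‖x‖ ^ (2 + γ)) ^ (-(((N : ℝ) - 4 - γ) / (2 + γ)))) :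
    (∀ x, 0 < U x) ∧
    (∀ x y : EuclideanSpace ℝ (Fin N), ‖x‖ = ‖y‖ → U x = U y) ∧
    (∀ x : EuclideanSpace ℝ (Fin N), x ≠ 0 →
      lap (fun y => ‖y‖ ^ (-γ) * lap U y) x = ‖x‖ ^ γ * U x ^ q) := by
  set K := ((N : ℝ) - 4 - γ) * ((N : ℝ) - 2) * ((N : ℝ) + γ) * ((N : ℝ) + 2 + 2 * γ) with hK_def
  set m := -(((N : ℝ) - 4 - γ) / (2 + γ)) with hm_def
  have hN5 : (5 : ℝ) ≤ N := by exact_mod_cast hN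
  have hp : 0 < 2 + γ := by linarith
  have hd : 0 < (N : ℝ) - 4 - γ := by linarith
  have hK : 0 < K := by apply_rules [mul_pos] <;> linarith
  have hC0 : 0 < C := hC ▸ Real.rpow_pos_of_pos hK _
  have hCq : C ^ q = C * K := by
    rw [hC, ← Real.rpow_mul hK.le, ← Real.rpow_add_one hK.ne']
    congr 1
    rw [hq]
    field_simp
    ring
  have hmq : m * q = m - 4 := by
    rw [hm_def, hq]
    field_simp
    ring
  have hbase : ∀ x : EuclideanSpace ℝ (Fin N), 0 < 1 + ‖x‖ ^ (2 + γ) := fun x => by positivity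
  refine ⟨fun x => hU x ▸ mul_pos hC0 (Real.rpow_pos_of_pos (hbase x) _),
    fun x y h => by rw [hU, hU, h], fun x hx => ?_⟩
  rw [funext hU, lap_rpow_norm_mul_lap_one_add_rpow_norm (by rw [hm_def]; field_simp; ring) hx]
  beta_reduce
  rw [Real.mul_rpow hC0.le (Real.rpow_nonneg (hbase x).le _), ← Real.rpow_mul (hbase x).le, hCq,
    hmq, hK_def, hm_def]
  field_simp
  ring
end

section
/- Let N ≥ 2 and a ∈ ℝ with a ≠ (N−4)/2 and a satisfying (−2−√(N²−2N+2))/2 ≤ a ≤ (−2+√(N²−2N+2))/2. Then inf_{k ∈ ℕ} (k + N/2 + a)²(k + (N−4)/2 − a)² · (2/(N−4−2a))² = ((N+2a)/2)², with the infimum attained at k = 0. -/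
/-! With `c = N/2 - 1` and `b = a + 1` the two factors are `k + c ± b`, so the `k`-th term is
`((k + c)² - b²)² / (c - b)²` and its value at `k = 0` is `(c + b)²`. For `k ≥ 1` the difference
`((k + c)² - b²)² - (c² - b²)²` factors as `k (k + 2c) · ((k + c)² + c² - 2b²)`, and the range
condition on `a` is exactly `2b² ≤ (c + 1)² + c²`, which makes the last factor nonnegative. -/

lemma sq_sub_sq_le_natCast_add_sq_sub_sq {b c : ℝ} (hc : 0 ≤ c)
    (hb : 2 * b ^ 2 ≤ (c + 1) ^ 2 + c ^ 2) (k : ℕ) :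
    (c ^ 2 - b ^ 2) ^ 2 ≤ (((k : ℝ) + c) ^ 2 - b ^ 2) ^ 2 := by
  rcases Nat.eq_zero_or_pos k with rfl | hk
  · simp
  have hk : (1 : ℝ) ≤ k := by exact_mod_cast hk
  have hdiff : 0 ≤ ((k + c) ^ 2 - b ^ 2) - (c ^ 2 - b ^ 2) := by
    have : ((k + c) ^ 2 - b ^ 2) - (c ^ 2 - b ^ 2) = k * (k + 2 * c) := by ring
    rw [this]
    positivity
  have hsum : 0 ≤ ((k + c) ^ 2 - b ^ 2) + (c ^ 2 - b ^ 2) := by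
    have : (1 + c) ^ 2 ≤ (k + c) ^ 2 := by gcongr
    linarith
  exact sq_le_sq' (by linarith) (by linarith)

lemma iInf_natCast_add_sq_sub_sq_div {b c : ℝ} (hc : 0 ≤ c)
    (hb : 2 * b ^ 2 ≤ (c + 1) ^ 2 + c ^ 2) :
    (⨅ k : ℕ, (((k : ℝ) + c) ^ 2 - b ^ 2) ^ 2 / (c - b) ^ 2) = (c ^ 2 - b ^ 2) ^ 2 / (c - b) ^ 2 := by
  have hleast : IsLeast (Set.range fun k : ℕ => (((k : ℝ) + c) ^ 2 - b ^ 2) ^ 2 / (c - b) ^ 2)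
      ((c ^ 2 - b ^ 2) ^ 2 / (c - b) ^ 2) := by
    refine ⟨⟨0, by simp⟩, Set.forall_mem_range.2 fun k => ?_⟩
    exact div_le_div_of_nonneg_right (sq_sub_sq_le_natCast_add_sq_sub_sq hc hb k) (sq_nonneg _)
  exact hleast.csInf_eq

/-- the infimum over `k ∈ ℕ` of
`(k + N/2 + a)²(k + (N−4)/2 − a)² (2/(N−4−2a))²` equals `((N+2a)/2)²`,
attained at `k = 0`, in the stated range of `a`. -/
theorem stmt13 (N : ℕ) (hN : 2 ≤ N) (a : ℝ) (ha : a ≠ ((N : ℝ) - 4) / 2)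
    (ha1 : (-2 - Real.sqrt ((N : ℝ) ^ 2 - 2 * (N : ℝ) + 2)) / 2 ≤ a)
    (ha2 : a ≤ (-2 + Real.sqrt ((N : ℝ) ^ 2 - 2 * (N : ℝ) + 2)) / 2) :
    (⨅ k : ℕ, ((k : ℝ) + (N : ℝ) / 2 + a) ^ 2 * ((k : ℝ) + ((N : ℝ) - 4) / 2 - a) ^ 2 *
        (2 / ((N : ℝ) - 4 - 2 * a)) ^ 2) = (((N : ℝ) + 2 * a) / 2) ^ 2 ∧
    ((0 : ℝ) + (N : ℝ) / 2 + a) ^ 2 * ((0 : ℝ) + ((N : ℝ) - 4) / 2 - a) ^ 2 *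
        (2 / ((N : ℝ) - 4 - 2 * a)) ^ 2 = (((N : ℝ) + 2 * a) / 2) ^ 2 := by
  have hc : (0 : ℝ) ≤ N / 2 - 1 := by
    have : (2 : ℝ) ≤ N := by exact_mod_cast hN
    linarith
  have hcb : (N / 2 - 1 : ℝ) - (a + 1) ≠ 0 := by
    contrapose! ha
    linarith
  have hb : 2 * (a + 1) ^ 2 ≤ ((N / 2 - 1 : ℝ) + 1) ^ 2 + (N / 2 - 1) ^ 2 := by
    have hsq : (2 * a + 2) ^ 2 ≤ (N : ℝ) ^ 2 - 2 * N + 2 :=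
      calc (2 * a + 2) ^ 2 ≤ Real.sqrt ((N : ℝ) ^ 2 - 2 * N + 2) ^ 2 :=
            sq_le_sq' (by linarith) (by linarith)
        _ = (N : ℝ) ^ 2 - 2 * N + 2 := Real.sq_sqrt (by nlinarith)
    linarith
  have hterm : ∀ x : ℝ, (x + N / 2 + a) ^ 2 * (x + (N - 4) / 2 - a) ^ 2 * (2 / (N - 4 - 2 * a)) ^ 2
      = ((x + (N / 2 - 1)) ^ 2 - (a + 1) ^ 2) ^ 2 / ((N / 2 - 1) - (a + 1)) ^ 2 := by
    intro x
    rw [show (N : ℝ) - 4 - 2 * a = 2 * (N / 2 - 1 - (a + 1)) by ring,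
      div_mul_cancel_left₀ two_ne_zero, inv_pow, ← div_eq_mul_inv]
    ring
  have hvalue : ((N / 2 - 1 : ℝ) ^ 2 - (a + 1) ^ 2) ^ 2 / ((N / 2 - 1) - (a + 1)) ^ 2
      = ((N + 2 * a) / 2) ^ 2 := by
    rw [div_eq_iff (pow_ne_zero 2 hcb)]
    ring
  constructor
  · simp only [hterm, iInf_natCast_add_sq_sub_sq_div hc hb, hvalue]
  · rw [hterm, zero_add, hvalue]
end
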